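/- Suppose m ≥ 2, all of G^j, H^j_{l₁}, L^j_{l₁,l₂}, M_{l₁,l₂}, Θ⁰, Θ¹, …, Θ^m are continuously differentiable on an open set U ⊆ ℝ^{1+m}, and the functions Π^j_{l₁,l₂} defined by (3.64) satisfy the compatibility conditions (3.61) at every point of U. Then for all l₁, l₂ ∈ {1, …, m}, the following four formulas hold on U (Σ_k denotes Σ_{k=1}^m): (3.99) ∂_x Θ⁰ = −2∂_{y^{l₁}}G^{l₁} + ∂_x H^{l₁}_{l₁} + 2Σ_k G^k L^{l₁}_{l₁,k} − Σ_k G^k L^k_{k,k} − (1/2)Σ_k H^k_{l₁}H^{l₁}_k − Σ_k G^k Θ^k + (1/2)Θ⁰·Θ⁰; (3.100) ∂_{y^{l₁}}Θ⁰ = (2/3)∂_x L^{l₁}_{l₁,l₁} − (1/3)∂_{y^{l₁}}H^{l₁}_{l₁} + (2/3)G^{l₁}M_{l₁,l₁} + (4/3)Σ_k G^k M_{l₁,k} − (1/3)Σ_k H^{l₁}_k L^k_{l₁,l₁} + (1/3)Σ_k H^k_{l₁} L^{l₁}_{l₁,k} − (1/2)Σ_k H^k_{l₁} L^k_{k,k}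 − (1/2)Σ_k H^k_{l₁} Θ^k + (1/2)L^{l₁}_{l₁,l₁}·Θ⁰ + (1/2)Θ⁰·Θ^{l₁}; (3.101) ∂_x Θ^{l₁} = −(2/3)∂_{y^{l₁}}H^{l₁}_{l₁} + (1/3)∂_x L^{l₁}_{l₁,l₁} + (4/3)G^{l₁}M_{l₁,l₁} + (2/3)Σ_k G^k M_{l₁,k} − (2/3)Σ_k H^{l₁}_k L^k_{l₁,l₁} + (2/3)Σ_k H^k_{l₁} L^{l₁}_{l₁,k} − (1/2)Σ_k H^k_{l₁} L^k_{k,k} − (1/2)Σ_k H^k_{l₁} Θ^k + (1/2)L^{l₁}_{l₁,l₁}·Θ⁰ + (1/2)Θ⁰·Θ^{l₁}; (3.102) ∂_{y^{l₂}}Θ^{l₁} = −∂_{y^{l₂}}L^{l₁}_{l₁,l₁} + 2∂_x M_{l₁,l₂} + Σ_k H^k_{l₁} M_{l₂,k} + (1/2)L^{l₁}_{l₁,l₁}·L^{l₂}_{l₂,l₂} − Σ_k L^k_{l₁,l₂} L^k_{k,k} + (1/2)L^{l₁}_{l₁,l₁}·Θ^{l₂} + (1/2)L^{l₂}_{l₂,l₂}·Θ^{l₁}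 − Σ_k L^k_{l₁,l₂} Θ^k + M_{l₁,l₂}·Θ⁰ + (1/2)Θ^{l₁}·Θ^{l₂}. In particular, the right-hand side of (3.99) is independent of l₁ and those of (3.100)–(3.101) are as displayed for every l₁. -/

import Mathlib

/-- Partial derivative in the direction of the `i`-th coordinate `y^i`
(with the convention `y⁰ ≡ x`) of a function on `ℝ^{1+m}`. -/
noncomputable def pd (m : ℕ) (i : Fin (m + 1)) (f : (Fin (m + 1) → ℝ) → ℝ) :
    (Fin (m + 1) → ℝ) → ℝ :=
  fun z => fderiv ℝ f z (Pi.single i 1)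

/-- The functions `Π^j_{l₁,l₂}` of equation (3.64), built from
`G^j, H^j_{l₁}, L^j_{l₁,l₂}, M_{l₁,l₂}` and the principal unknowns
`Θ⁰, Θ¹, …, Θ^m`.  Indices `0` correspond to `x = y⁰`, and index `a+1`
corresponds to `y^{a+1}`. -/
noncomputable def Pi3 (m : ℕ)
    (G : Fin m → (Fin (m + 1) → ℝ) → ℝ)
    (H : Fin m → Fin m → (Fin (m + 1) → ℝ) → ℝ)
    (L : Fin m → Fin m → Fin m → (Fin (m + 1) → ℝ) → ℝ)
    (M : Fin m → Fin m → (Fin (m + 1) → ℝ) → ℝ)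
    (Θ : Fin (m + 1) → (Fin (m + 1) → ℝ) → ℝ) :
    Fin (m + 1) → Fin (m + 1) → Fin (m + 1) → (Fin (m + 1) → ℝ) → ℝ :=
  Fin.cons
    -- j = 0
    (Fin.cons
      -- l₁ = 0
      (Fin.cons (Θ 0)
        (fun b z => (1/2) * L b b b z + (1/2) * Θ b.succ z))
      -- l₁ = a + 1
      (fun a => Fin.cons
        (fun z => (1/2) * L a a a z + (1/2) * Θ a.succ z)
        (fun b => M a b)))
    -- j = i + 1
    (fun i => Fin.cons
      (Fin.cons (fun z => -(G i z))
        (fun b z => -(1/2) * H i b z + (1/2) * (if i = b then 1 else 0) * Θ 0 z))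
      (fun a => Fin.cons
        (fun z => -(1/2) * H i a z + (1/2) * (if i = a then 1 else 0) * Θ 0 z)
        (fun b z =>
          -(L i a b z) + (1/2) * (if i = a then 1 else 0) * L b b b z
            + (1/2) * (if i = b then 1 else 0) * L a a a z
            + (1/2) * (if i = a then 1 else 0) * Θ b.succ z
            + (1/2) * (if i = b then 1 else 0) * Θ a.succ z)))

/-! Four instances of (3.61) suffice. With `(j, l₁, l₂, l₃)` equal to `(0, 0, 0, a)`, `(a, 0, 0, a)`,
`(a, a, 0, a)` and `(0, a, 0, b)` they express `∂_a Θ⁰ - ½ ∂_x Θ^a`, `∂_x Θ⁰`, `½ ∂_a Θ⁰ - ∂_x Θ^a`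
and `∂_b Θ^a` through the data, the Kronecker deltas of (3.64) collapsing the sums over `k`.
Thus (3.99) and (3.102) are read off directly, and (3.100), (3.101) solve the `2 × 2` linear system
formed by the first and third instances. -/

theorem pd_neg {m : ℕ} (i : Fin (m + 1)) (f : (Fin (m + 1) → ℝ) → ℝ) (z : Fin (m + 1) → ℝ) :
    pd m i (fun w => -f w) z = -pd m i f z := by
  simp only [pd, fderiv_fun_neg, neg_apply]

theorem pd_mul_const_add_mul_const {m : ℕ} {i : Fin (m + 1)} {f g : (Fin (m + 1) → ℝ) → ℝ}
    {z : Fin (m + 1) → ℝ} (hf : DifferentiableAt ℝ f z) (hg : DifferentiableAt ℝ g z) (c d : ℝ) :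
    pd m i (fun w => f w * c + g w * d) z = pd m i f z * c + pd m i g z * d := by
  simp only [pd, fderiv_fun_add (hf.mul_const c) (hg.mul_const d), fderiv_mul_const hf,
    fderiv_mul_const hg, add_apply, smul_apply, smul_eq_mul]
  ring

/-- The compatibility conditions (3.61) on `U` for a family `P j l₁ l₂` of functions. -/
def IsCompatibleOn {m : ℕ} (P : Fin (m + 1) → Fin (m + 1) → Fin (m + 1) → (Fin (m + 1) → ℝ) → ℝ)
    (U : Set (Fin (m + 1) → ℝ)) : Prop :=
  ∀ (j l₁ l₂ l₃ : Fin (m + 1)), ∀ z ∈ U,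
    pd m l₃ (P j l₁ l₂) z - pd m l₂ (P j l₁ l₃) z =
      -(∑ k, P k l₁ l₂ z * P j l₃ k z) + ∑ k, P k l₁ l₃ z * P j l₂ k z

namespace IsCompatibleOn

variable {m : ℕ} {U : Set (Fin (m + 1) → ℝ)} {G : Fin m → (Fin (m + 1) → ℝ) → ℝ}
  {H : Fin m → Fin m → (Fin (m + 1) → ℝ) → ℝ} {L : Fin m → Fin m → Fin m → (Fin (m + 1) → ℝ) → ℝ}
  {M : Fin m → Fin m → (Fin (m + 1) → ℝ) → ℝ} {Θ : Fin (m + 1) → (Fin (m + 1) → ℝ) → ℝ}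
  {z : Fin (m + 1) → ℝ}

theorem pi3_zero_zero_zero_succ (hP : IsCompatibleOn (Pi3 m G H L M Θ) U) (hz : z ∈ U)
    (a : Fin m) (hL : DifferentiableAt ℝ (L a a a) z) (hΘ : DifferentiableAt ℝ (Θ a.succ) z) :
    pd m a.succ (Θ 0) z - (pd m 0 (L a a a) z + pd m 0 (Θ a.succ) z) / 2 =
      ∑ k, G k z * M a k z - (∑ k, H k a z * L k k k z + ∑ k, H k a z * Θ k.succ z) / 4
        + Θ 0 z * (L a a a z + Θ a.succ z) / 4 := by
  have h := hP 0 0 0 a.succ z hz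
  simp only [Pi3, Fin.sum_univ_succ, Fin.cons_zero, Fin.cons_succ] at h
  simp only [mul_add, add_mul, mul_ite, ite_mul, mul_one, mul_zero, zero_mul,
    Finset.sum_add_distrib, Finset.sum_ite_eq', Finset.mem_univ, if_true] at h
  ring_nf at h
  simp only [← Finset.sum_mul, Finset.sum_neg_distrib, pd_mul_const_add_mul_const hL hΘ] at h
  linear_combination h

theorem pi3_succ_zero_zero_succ (hP : IsCompatibleOn (Pi3 m G H L M Θ) U) (hz : z ∈ U)
    (a : Fin m) (hH : DifferentiableAt ℝ (H a a) z) (hΘ : DifferentiableAt ℝ (Θ 0) z) :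
    -pd m a.succ (G a) z + (pd m 0 (H a a) z - pd m 0 (Θ 0) z) / 2 =
      -∑ k, G k z * L a a k z + (∑ k, G k z * L k k k z + ∑ k, G k z * Θ k.succ z) / 2
        + (∑ k, H k a z * H a k z) / 4 - Θ 0 z ^ 2 / 4 := by
  have h := hP a.succ 0 0 a.succ z hz
  simp only [Pi3, Fin.sum_univ_succ, Fin.cons_zero, Fin.cons_succ] at h
  simp only [mul_add, add_mul, mul_ite, ite_mul, mul_one, mul_zero, zero_mul,
    Finset.sum_add_distrib, Finset.sum_ite_eq, Finset.sum_ite_eq', Finset.mem_univ, if_true] at h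
  ring_nf at h
  simp only [← Finset.sum_mul, pd_neg, pd_mul_const_add_mul_const hH hΘ] at h
  linear_combination h

theorem pi3_succ_succ_zero_succ (hP : IsCompatibleOn (Pi3 m G H L M Θ) U) (hz : z ∈ U)
    (a : Fin m) (hH : DifferentiableAt ℝ (H a a) z) (hΘ : DifferentiableAt ℝ (Θ 0) z) :
    (pd m a.succ (Θ 0) z - pd m a.succ (H a a) z) / 2 - pd m 0 (Θ a.succ) z =
      -G a z * M a a z - (∑ k, H k a z * L a a k z) / 2 + (∑ k, H a k z * L k a a z) / 2
        + (∑ k, H k a z * L k k k z + ∑ k, H k a z * Θ k.succ z) / 4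
        - Θ 0 z * (L a a a z + Θ a.succ z) / 4 := by
  have h := hP a.succ a.succ 0 a.succ z hz
  simp only [Pi3, Fin.sum_univ_succ, Fin.cons_zero, Fin.cons_succ] at h
  simp only [mul_add, add_mul, mul_ite, ite_mul, mul_one, mul_zero, zero_mul,
    Finset.sum_add_distrib, Finset.sum_ite_eq, Finset.sum_ite_eq', Finset.mem_univ, if_true] at h
  ring_nf at h
  simp only [← Finset.sum_mul, mul_comm (L _ a a z) (H a _ z), pd_mul_const_add_mul_const hH hΘ] at h
  linear_combination h

theorem pi3_zero_succ_zero_succ (hP : IsCompatibleOn (Pi3 m G H L M Θ) U) (hz : z ∈ U)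
    (a b : Fin m) (hL : DifferentiableAt ℝ (L a a a) z) (hΘ : DifferentiableAt ℝ (Θ a.succ) z) :
    (pd m b.succ (L a a a) z + pd m b.succ (Θ a.succ) z) / 2 - pd m 0 (M a b) z =
      (L a a a z + Θ a.succ z) * (L b b b z + Θ b.succ z) / 4 + Θ 0 z * (M a b z - M b a z / 2)
        + (∑ k, H k a z * M b k z) / 2
        - (∑ k, L k a b z * L k k k z + ∑ k, L k a b z * Θ k.succ z) / 2 := by
  have h := hP 0 a.succ 0 b.succ z hz
  simp only [Pi3, Fin.sum_univ_succ, Fin.cons_zero, Fin.cons_succ] at h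
  simp only [mul_add, add_mul, mul_ite, ite_mul, mul_one, mul_zero, zero_mul,
    Finset.sum_add_distrib, Finset.sum_ite_eq', Finset.mem_univ, if_true] at h
  ring_nf at h
  simp only [← Finset.sum_mul, pd_mul_const_add_mul_const hL hΘ] at h
  linear_combination h

end IsCompatibleOn

theorem principal_unknowns_first_derivatives_general (m : ℕ)
    (U : Set (Fin (m + 1) → ℝ)) (hU : IsOpen U)
    (G : Fin m → (Fin (m + 1) → ℝ) → ℝ)
    (H : Fin m → Fin m → (Fin (m + 1) → ℝ) → ℝ)
    (L : Fin m → Fin m → Fin m → (Fin (m + 1) → ℝ) → ℝ)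
    (M : Fin m → Fin m → (Fin (m + 1) → ℝ) → ℝ)
    (Θ : Fin (m + 1) → (Fin (m + 1) → ℝ) → ℝ)
    (hMsym : ∀ a b, M a b = M b a)
    (hHd : ∀ j a, ContDiffOn ℝ 1 (H j a) U)
    (hLd : ∀ j a b, ContDiffOn ℝ 1 (L j a b) U)
    (hΘd : ∀ i, ContDiffOn ℝ 1 (Θ i) U)
    (hcompat : ∀ (j l₁ l₂ l₃ : Fin (m + 1)), ∀ z ∈ U,
      pd m l₃ (Pi3 m G H L M Θ j l₁ l₂) z - pd m l₂ (Pi3 m G H L M Θ j l₁ l₃) z =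
        -(∑ k : Fin (m + 1), Pi3 m G H L M Θ k l₁ l₂ z * Pi3 m G H L M Θ j l₃ k z) +
          ∑ k : Fin (m + 1), Pi3 m G H L M Θ k l₁ l₃ z * Pi3 m G H L M Θ j l₂ k z) :
    ∀ (l₁ l₂ : Fin m), ∀ z ∈ U,
      -- (3.99)
      (pd m 0 (Θ 0) z =
        -2 * pd m l₁.succ (G l₁) z + pd m 0 (H l₁ l₁) z
          + 2 * ∑ k : Fin m, G k z * L l₁ l₁ k z
          - ∑ k : Fin m, G k z * L k k k z
          - (1/2) * ∑ k : Fin m, H k l₁ z * H l₁ k z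
          - ∑ k : Fin m, G k z * Θ k.succ z
          + (1/2) * Θ 0 z * Θ 0 z) ∧
      -- (3.100)
      (pd m l₁.succ (Θ 0) z =
        (2/3) * pd m 0 (L l₁ l₁ l₁) z - (1/3) * pd m l₁.succ (H l₁ l₁) z
          + (2/3) * G l₁ z * M l₁ l₁ z
          + (4/3) * ∑ k : Fin m, G k z * M l₁ k z
          - (1/3) * ∑ k : Fin m, H l₁ k z * L k l₁ l₁ z
          + (1/3) * ∑ k : Fin m, H k l₁ z * L l₁ l₁ k z
          - (1/2) * ∑ k : Fin m, H k l₁ z * L k k k z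
          - (1/2) * ∑ k : Fin m, H k l₁ z * Θ k.succ z
          + (1/2) * L l₁ l₁ l₁ z * Θ 0 z
          + (1/2) * Θ 0 z * Θ l₁.succ z) ∧
      -- (3.101)
      (pd m 0 (Θ l₁.succ) z =
        -(2/3) * pd m l₁.succ (H l₁ l₁) z + (1/3) * pd m 0 (L l₁ l₁ l₁) z
          + (4/3) * G l₁ z * M l₁ l₁ z
          + (2/3) * ∑ k : Fin m, G k z * M l₁ k z
          - (2/3) * ∑ k : Fin m, H l₁ k z * L k l₁ l₁ z
          + (2/3) * ∑ k : Fin m, H k l₁ z * L l₁ l₁ k z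
          - (1/2) * ∑ k : Fin m, H k l₁ z * L k k k z
          - (1/2) * ∑ k : Fin m, H k l₁ z * Θ k.succ z
          + (1/2) * L l₁ l₁ l₁ z * Θ 0 z
          + (1/2) * Θ 0 z * Θ l₁.succ z) ∧
      -- (3.102)
      (pd m l₂.succ (Θ l₁.succ) z =
        -(pd m l₂.succ (L l₁ l₁ l₁) z) + 2 * pd m 0 (M l₁ l₂) z
          + ∑ k : Fin m, H k l₁ z * M l₂ k z
          + (1/2) * L l₁ l₁ l₁ z * L l₂ l₂ l₂ z
          - ∑ k : Fin m, L k l₁ l₂ z * L k k k z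
          + (1/2) * L l₁ l₁ l₁ z * Θ l₂.succ z
          + (1/2) * L l₂ l₂ l₂ z * Θ l₁.succ z
          - ∑ k : Fin m, L k l₁ l₂ z * Θ k.succ z
          + M l₁ l₂ z * Θ 0 z
          + (1/2) * Θ l₁.succ z * Θ l₂.succ z) := by
  have hP : IsCompatibleOn (Pi3 m G H L M Θ) U := hcompat
  intro a b z hz
  have hdiff {f : (Fin (m + 1) → ℝ) → ℝ} (hf : ContDiffOn ℝ 1 f U) : DifferentiableAt ℝ f z :=
    (hf.contDiffAt (hU.mem_nhds hz)).differentiableAt one_ne_zero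
  have h₁ := hP.pi3_zero_zero_zero_succ hz a (hdiff (hLd a a a)) (hdiff (hΘd a.succ))
  have h₂ := hP.pi3_succ_zero_zero_succ hz a (hdiff (hHd a a)) (hdiff (hΘd 0))
  have h₃ := hP.pi3_succ_succ_zero_succ hz a (hdiff (hHd a a)) (hdiff (hΘd 0))
  have h₄ := hP.pi3_zero_succ_zero_succ hz a b (hdiff (hLd a a a)) (hdiff (hΘd a.succ))
  refine ⟨?_, ?_, ?_, ?_⟩
  · linear_combination -2 * h₂
  · linear_combination 4 / 3 * h₁ - 2 / 3 * h₃
  · linear_combination 2 / 3 * h₁ - 4 / 3 * h₃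
  · linear_combination 2 * h₄ - Θ 0 z * congrFun (hMsym b a) z

/-- If the functions `Π^j_{l₁,l₂}` of (3.64) satisfy the compatibility conditions
(3.61), then all first-order derivatives of the principal unknowns `Θ⁰, Θ^{l₁}`
are given by the explicit formulas (3.99)–(3.102). -/
theorem principal_unknowns_first_derivatives (m : ℕ) (hm : 2 ≤ m)
    (U : Set (Fin (m + 1) → ℝ)) (hU : IsOpen U)
    (G : Fin m → (Fin (m + 1) → ℝ) → ℝ)
    (H : Fin m → Fin m → (Fin (m + 1) → ℝ) → ℝ)
    (L : Fin m → Fin m → Fin m → (Fin (m + 1) → ℝ) → ℝ)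
    (M : Fin m → Fin m → (Fin (m + 1) → ℝ) → ℝ)
    (Θ : Fin (m + 1) → (Fin (m + 1) → ℝ) → ℝ)
    (hLsym : ∀ j a b, L j a b = L j b a)
    (hMsym : ∀ a b, M a b = M b a)
    (hGd : ∀ j, ContDiffOn ℝ 1 (G j) U)
    (hHd : ∀ j a, ContDiffOn ℝ 1 (H j a) U)
    (hLd : ∀ j a b, ContDiffOn ℝ 1 (L j a b) U)
    (hMd : ∀ a b, ContDiffOn ℝ 1 (M a b) U)
    (hΘd : ∀ i, ContDiffOn ℝ 1 (Θ i) U)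
    (hcompat : ∀ (j l₁ l₂ l₃ : Fin (m + 1)), ∀ z ∈ U,
      pd m l₃ (Pi3 m G H L M Θ j l₁ l₂) z - pd m l₂ (Pi3 m G H L M Θ j l₁ l₃) z =
        -(∑ k : Fin (m + 1), Pi3 m G H L M Θ k l₁ l₂ z * Pi3 m G H L M Θ j l₃ k z) +
          ∑ k : Fin (m + 1), Pi3 m G H L M Θ k l₁ l₃ z * Pi3 m G H L M Θ j l₂ k z) :
    ∀ (l₁ l₂ : Fin m), ∀ z ∈ U,
      -- (3.99)
      (pd m 0 (Θ 0) z =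
        -2 * pd m l₁.succ (G l₁) z + pd m 0 (H l₁ l₁) z
          + 2 * ∑ k : Fin m, G k z * L l₁ l₁ k z
          - ∑ k : Fin m, G k z * L k k k z
          - (1/2) * ∑ k : Fin m, H k l₁ z * H l₁ k z
          - ∑ k : Fin m, G k z * Θ k.succ z
          + (1/2) * Θ 0 z * Θ 0 z) ∧
      -- (3.100)
      (pd m l₁.succ (Θ 0) z =
        (2/3) * pd m 0 (L l₁ l₁ l₁) z - (1/3) * pd m l₁.succ (H l₁ l₁) z
          + (2/3) * G l₁ z * M l₁ l₁ z
          + (4/3) * ∑ k : Fin m, G k z * M l₁ k z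
          - (1/3) * ∑ k : Fin m, H l₁ k z * L k l₁ l₁ z
          + (1/3) * ∑ k : Fin m, H k l₁ z * L l₁ l₁ k z
          - (1/2) * ∑ k : Fin m, H k l₁ z * L k k k z
          - (1/2) * ∑ k : Fin m, H k l₁ z * Θ k.succ z
          + (1/2) * L l₁ l₁ l₁ z * Θ 0 z
          + (1/2) * Θ 0 z * Θ l₁.succ z) ∧
      -- (3.101)
      (pd m 0 (Θ l₁.succ) z =
        -(2/3) * pd m l₁.succ (H l₁ l₁) z + (1/3) * pd m 0 (L l₁ l₁ l₁) z
          + (4/3) * G l₁ z * M l₁ l₁ z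
          + (2/3) * ∑ k : Fin m, G k z * M l₁ k z
          - (2/3) * ∑ k : Fin m, H l₁ k z * L k l₁ l₁ z
          + (2/3) * ∑ k : Fin m, H k l₁ z * L l₁ l₁ k z
          - (1/2) * ∑ k : Fin m, H k l₁ z * L k k k z
          - (1/2) * ∑ k : Fin m, H k l₁ z * Θ k.succ z
          + (1/2) * L l₁ l₁ l₁ z * Θ 0 z
          + (1/2) * Θ 0 z * Θ l₁.succ z) ∧
      -- (3.102)
      (pd m l₂.succ (Θ l₁.succ) z =
        -(pd m l₂.succ (L l₁ l₁ l₁) z) + 2 * pd m 0 (M l₁ l₂) z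
          + ∑ k : Fin m, H k l₁ z * M l₂ k z
          + (1/2) * L l₁ l₁ l₁ z * L l₂ l₂ l₂ z
          - ∑ k : Fin m, L k l₁ l₂ z * L k k k z
          + (1/2) * L l₁ l₁ l₁ z * Θ l₂.succ z
          + (1/2) * L l₂ l₂ l₂ z * Θ l₁.succ z
          - ∑ k : Fin m, L k l₁ l₂ z * Θ k.succ z
          + M l₁ l₂ z * Θ 0 z
          + (1/2) * Θ l₁.succ z * Θ l₂.succ z) :=
  principal_unknowns_first_derivatives_general m U hU G H L M Θ hMsym hHd hLd hΘd hcompat
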